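/- arXiv:math/0210052 — 5 statements merged into one kernel-verified Lean document; each statement's English description precedes it below -/
import Mathlib

section
/- Let A be a finitely generated free abelian group (equivalently, A ≅ ℤ^n), G an abelian group without odd torsion, h : A → G a homomorphism, and L ≤ A a subgroup with h(L) = 0 and L + 2A = A. Then h = 0. (This is the algebraic core of the Binary Cycle Test for finite graphs.) -/
/-!
The quotient `A ⧸ L` is a finitely generated `ℤ`-module equal to twice itself, so by Nakayama's
lemma it is killed by an integer `r ≡ 1 mod 2`. Then `r • h a = h (r • a) = 0` for every `a`,
and since `G` has no odd torsion, `h a = 0`.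
-/

theorem exists_odd_zsmul_eq_zero_of_forall_eq_two_nsmul {M : Type*} [AddCommGroup M]
    [Module.Finite ℤ M] (h2 : ∀ m : M, ∃ b : M, m = 2 • b) :
    ∃ r : ℤ, Odd r ∧ ∀ m : M, r • m = 0 := by
  have hle : (⊤ : Submodule ℤ M) ≤ Ideal.span {(2 : ℤ)} • ⊤ := by
    intro m _
    obtain ⟨b, rfl⟩ := h2 m
    rw [← natCast_zsmul]
    exact Submodule.smul_mem_smul (Ideal.subset_span rfl) trivial
  obtain ⟨r, hr1, hr⟩ := Submodule.exists_sub_one_mem_and_smul_eq_zero_of_fg_of_le_smul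
    (Ideal.span {(2 : ℤ)}) ⊤ Module.Finite.fg_top hle
  obtain ⟨c, hc⟩ := Ideal.mem_span_singleton'.mp hr1
  exact ⟨r, ⟨c, by linarith⟩, fun m => hr m trivial⟩

theorem AddSubgroup.exists_odd_zsmul_mem_of_forall_eq_add_two_nsmul {A : Type*}
    [AddCommGroup A] [Module.Finite ℤ A] (L : AddSubgroup A)
    (hL2 : ∀ a : A, ∃ l ∈ L, ∃ b : A, a = l + 2 • b) :
    ∃ r : ℤ, Odd r ∧ ∀ a : A, r • a ∈ L := by
  let L' := AddSubgroup.toIntSubmodule L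
  have h2 : ∀ q : A ⧸ L', ∃ b, q = 2 • b := by
    intro q
    obtain ⟨a, rfl⟩ := L'.mkQ_surjective q
    obtain ⟨l, hl, b, rfl⟩ := hL2 a
    refine ⟨L'.mkQ b, ?_⟩
    rw [map_add, Submodule.mkQ_apply, (Submodule.Quotient.mk_eq_zero L').mpr hl, zero_add,
      map_nsmul]
  obtain ⟨r, hr, hrq⟩ := exists_odd_zsmul_eq_zero_of_forall_eq_two_nsmul h2
  refine ⟨r, hr, fun a => ?_⟩
  have := hrq (L'.mkQ a)
  rwa [← map_zsmul, Submodule.mkQ_apply, Submodule.Quotient.mk_eq_zero] at this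

theorem eq_zero_of_odd_zsmul_eq_zero {G : Type*} [AddCommGroup G]
    (hG : ∀ g : G, ∀ n : ℕ, Odd n → 0 < n → n • g = 0 → g = 0)
    {r : ℤ} (hr : Odd r) {g : G} (hg : r • g = 0) : g = 0 := by
  refine hG g r.natAbs hr.natAbs hr.natAbs.pos ?_
  rcases Int.natAbs_eq r with he | he
  · rwa [← natCast_zsmul, ← he]
  · rwa [← natCast_zsmul, ← neg_neg (r.natAbs : ℤ), ← he, neg_zsmul, neg_eq_zero]

theorem stmt4_general {A G : Type*} [AddCommGroup A] [Module.Finite ℤ A]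
    [AddCommGroup G]
    (hG : ∀ g : G, ∀ n : ℕ, Odd n → 0 < n → n • g = 0 → g = 0)
    (h : A →+ G) (L : AddSubgroup A)
    (hL : ∀ x ∈ L, h x = 0)
    (hL2 : ∀ a : A, ∃ l ∈ L, ∃ b : A, a = l + 2 • b) :
    h = 0 := by
  obtain ⟨r, hr, hrL⟩ := L.exists_odd_zsmul_mem_of_forall_eq_add_two_nsmul hL2
  ext a
  refine eq_zero_of_odd_zsmul_eq_zero hG hr ?_
  rw [← map_zsmul]
  exact hL _ (hrL a)

/-- Finite-rank case: if `A` is finitely generated free abelian, `G` abelian without odd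
torsion, `h` kills `L`, and `L + 2A = A`, then `h = 0`. -/
theorem stmt4 {A G : Type*} [AddCommGroup A] [Module.Free ℤ A] [Module.Finite ℤ A]
    [AddCommGroup G]
    (hG : ∀ g : G, ∀ n : ℕ, Odd n → 0 < n → n • g = 0 → g = 0)
    (h : A →+ G) (L : AddSubgroup A)
    (hL : ∀ x ∈ L, h x = 0)
    (hL2 : ∀ a : A, ∃ l ∈ L, ∃ b : A, a = l + 2 • b) :
    h = 0 :=
  stmt4_general hG h L hL hL2
end

section
/- Let A be the free abelian group with basis { e_k, g_k, h_k : k ≥ 1 } and let H ≤ A be the subgroup generated by { e_k + g_k + h_k : k ≥ 1 } ∪ { g_k + e_{k+1} : k ≥ 1 } ∪ { h_k + e_{k+1} : k ≥ 1 }. Then e₁ ∉ H, so H ≠ A. -/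
/-- The free abelian group on the basis `{e_k, g_k, h_k : k ∈ ℕ}`. -/
abbrev FA : Type := (Fin 3 × ℕ) →₀ ℤ

noncomputable def eGen (k : ℕ) : FA := Finsupp.single (0, k) 1
noncomputable def gGen (k : ℕ) : FA := Finsupp.single (1, k) 1
noncomputable def hGen (k : ℕ) : FA := Finsupp.single (2, k) 1

/-- The subgroup generated by `e_k+g_k+h_k`, `g_k+e_{k+1}`, `h_k+e_{k+1}`. -/
noncomputable def Hsub : AddSubgroup FA :=
  AddSubgroup.closure
    ((Set.range fun k : ℕ => eGen k + gGen k + hGen k) ∪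
      (Set.range fun k : ℕ => gGen k + eGen (k + 1)) ∪
      (Set.range fun k : ℕ => hGen k + eGen (k + 1)))

/-!
Give `e_k` the weight `2⁻ᵏ` and `g_k`, `h_k` the weight `-2⁻⁽ᵏ⁺¹⁾`. The induced additive map
`A → ℚ` vanishes on every generator of `H`, since `2⁻ᵏ = 2 · 2⁻⁽ᵏ⁺¹⁾` and `2⁻⁽ᵏ⁺¹⁾` is the weight
of `e_{k+1}`; but it sends `e₁` to `1`.
-/

theorem AddSubgroup.notMem_closure_of_forall_map_eq_zero {G M : Type*} [AddGroup G] [AddGroup M]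
    (f : G →+ M) {s : Set G} (hs : ∀ y ∈ s, f y = 0) {x : G} (hx : f x ≠ 0) :
    x ∉ AddSubgroup.closure s :=
  fun h => hx ((AddSubgroup.closure_le f.ker).2 hs h)

noncomputable def basisWeight (p : Fin 3 × ℕ) : ℚ :=
  if p.1 = 0 then (1 / 2) ^ p.2 else -(1 / 2) ^ (p.2 + 1)

noncomputable def weight : FA →+ ℚ :=
  (Finsupp.linearCombination ℤ basisWeight).toAddMonoidHom

lemma weight_eGen (k : ℕ) : weight (eGen k) = (1 / 2) ^ k := by
  simp [weight, eGen, basisWeight]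

lemma weight_gGen (k : ℕ) : weight (gGen k) = -(1 / 2) ^ (k + 1) := by
  simp [weight, gGen, basisWeight]

lemma weight_hGen (k : ℕ) : weight (hGen k) = -(1 / 2) ^ (k + 1) := by
  simp [weight, hGen, basisWeight]

lemma weight_eq_zero_of_mem_generators {y : FA}
    (hy : y ∈ (Set.range fun k : ℕ => eGen k + gGen k + hGen k) ∪
      (Set.range fun k : ℕ => gGen k + eGen (k + 1)) ∪
      (Set.range fun k : ℕ => hGen k + eGen (k + 1))) :
    weight y = 0 := by
  rcases hy with (⟨k, rfl⟩ | ⟨k, rfl⟩) | ⟨k, rfl⟩ <;>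
    simp only [map_add, weight_eGen, weight_gGen, weight_hGen] <;> ring

/-- `e_1` (here `e_0` with 0-based indexing) is not in `H`, so `H ≠ A`. -/
theorem stmt14 : eGen 0 ∉ Hsub ∧ Hsub ≠ ⊤ := by
  have he : eGen 0 ∉ Hsub :=
    AddSubgroup.notMem_closure_of_forall_map_eq_zero weight
      (fun _ hy => weight_eq_zero_of_mem_generators hy) (by simp [weight_eGen])
  exact ⟨he, fun htop => he (htop ▸ AddSubgroup.mem_top _)⟩
end

section
/- With A and H as in the infinite counterexample (A free abelian on e_k, g_k, h_k; H generated by e_k+g_k+h_k, g_k+e_{k+1}, h_k+e_{k+1} for all k ≥ 1), the quotient A/H is isomorphic to the additive group ℤ[1/2] of dyadic rationals, via e_k ↦ 1/2^{k-1}, g_k ↦ −1/2^k, h_k ↦ −1/2^k. -/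
/-!
The assignment `e_k ↦ 1/2^k`, `g_k, h_k ↦ -1/2^(k+1)` kills the three families of relations,
so it induces a map `A/H → ℚ`, whose image is generated by the `1/2^k`, i.e. is `ℤ[1/2]`.
In `A/H` the relations give `[g_k] = [h_k] = -[e_{k+1}]` and `[e_k] = 2[e_{k+1}]`, so every
class is `n[e_N]` for some `n, N`; such a class maps to `n/2^N`, which vanishes only if `n = 0`:
the map is injective.
-/

/-- The additive group of dyadic rationals, as a subgroup of `ℚ`. -/
noncomputable def DyadicSubgroup : AddSubgroup ℚ :=
  AddSubgroup.closure (Set.range fun k : ℕ => (1 : ℚ) / 2 ^ k)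

section DivisibleSequence

variable {G : Type*} [AddCommGroup G] {d : ℤ} {x : ℕ → G}

theorem eq_pow_zsmul_of_eq_zsmul_succ (hx : ∀ k, x k = d • x (k + 1)) (k m : ℕ) :
    x k = d ^ m • x (k + m) := by
  induction m with
  | zero => simp
  | succ m ih => rw [ih, hx (k + m), smul_smul, ← pow_succ, ← add_assoc]

-- Any two terms are multiples of a common later term.
theorem exists_eq_zsmul_of_mem_closure_range (hx : ∀ k, x k = d • x (k + 1)) {y : G}
    (hy : y ∈ AddSubgroup.closure (Set.range x)) : ∃ (N : ℕ) (n : ℤ), y = n • x N := by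
  induction hy using AddSubgroup.closure_induction with
  | mem y hy =>
    obtain ⟨k, rfl⟩ := hy
    exact ⟨k, 1, (one_zsmul _).symm⟩
  | zero => exact ⟨0, 0, (zero_zsmul _).symm⟩
  | add y z _ _ ihy ihz =>
    obtain ⟨M, m, rfl⟩ := ihy
    obtain ⟨N, n, rfl⟩ := ihz
    refine ⟨M + N, m * d ^ N + n * d ^ M, ?_⟩
    rw [eq_pow_zsmul_of_eq_zsmul_succ hx M N, eq_pow_zsmul_of_eq_zsmul_succ hx N M, add_comm N M,
      smul_smul, smul_smul, add_zsmul]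
  | neg y _ ih =>
    obtain ⟨N, n, rfl⟩ := ih
    exact ⟨N, -n, (neg_zsmul _ _).symm⟩

end DivisibleSequence

noncomputable def dyadicValue (p : Fin 3 × ℕ) : ℚ :=
  if p.1 = 0 then 1 / 2 ^ p.2 else -(1 / 2 ^ (p.2 + 1))

noncomputable def dyadicHom : FA →+ ℚ :=
  Finsupp.liftAddHom fun p => zmultiplesHom ℚ (dyadicValue p)

@[simp]
theorem dyadicHom_single (p : Fin 3 × ℕ) (a : ℤ) :
    dyadicHom (Finsupp.single p a) = a • dyadicValue p := by
  simp [dyadicHom]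

@[simp]
theorem dyadicHom_eGen (k : ℕ) : dyadicHom (eGen k) = 1 / 2 ^ k := by
  simp [eGen, dyadicValue]

@[simp]
theorem dyadicHom_gGen (k : ℕ) : dyadicHom (gGen k) = -(1 / 2 ^ (k + 1)) := by
  simp [gGen, dyadicValue]

@[simp]
theorem dyadicHom_hGen (k : ℕ) : dyadicHom (hGen k) = -(1 / 2 ^ (k + 1)) := by
  simp [hGen, dyadicValue]

theorem Hsub_le_ker_dyadicHom : Hsub ≤ dyadicHom.ker := by
  rw [Hsub, AddSubgroup.closure_le]
  rintro x ((⟨k, rfl⟩ | ⟨k, rfl⟩) | ⟨k, rfl⟩) <;>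
    simp only [SetLike.mem_coe, AddMonoidHom.mem_ker, map_add, dyadicHom_eGen, dyadicHom_gGen,
      dyadicHom_hGen] <;> ring

noncomputable def quotientDyadicHom : FA ⧸ Hsub →+ ℚ :=
  QuotientAddGroup.lift Hsub dyadicHom Hsub_le_ker_dyadicHom

@[simp]
theorem quotientDyadicHom_mk (x : FA) : quotientDyadicHom x = dyadicHom x := rfl

theorem mk_gGen (k : ℕ) : (gGen k : FA ⧸ Hsub) = -(eGen (k + 1) : FA ⧸ Hsub) := by
  rw [eq_neg_iff_add_eq_zero, ← QuotientAddGroup.mk_add, QuotientAddGroup.eq_zero_iff]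
  exact AddSubgroup.subset_closure (Or.inl (Or.inr ⟨k, rfl⟩))

theorem mk_hGen (k : ℕ) : (hGen k : FA ⧸ Hsub) = -(eGen (k + 1) : FA ⧸ Hsub) := by
  rw [eq_neg_iff_add_eq_zero, ← QuotientAddGroup.mk_add, QuotientAddGroup.eq_zero_iff]
  exact AddSubgroup.subset_closure (Or.inr ⟨k, rfl⟩)

theorem mk_eGen (k : ℕ) :
    (eGen k : FA ⧸ Hsub) = (2 : ℤ) • (eGen (k + 1) : FA ⧸ Hsub) := by
  have hrel : ((eGen k + gGen k + hGen k : FA) : FA ⧸ Hsub) = 0 :=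
    (QuotientAddGroup.eq_zero_iff _).2 (AddSubgroup.subset_closure (Or.inl (Or.inl ⟨k, rfl⟩)))
  rw [QuotientAddGroup.mk_add, QuotientAddGroup.mk_add, mk_gGen, mk_hGen] at hrel
  rw [two_zsmul, ← sub_eq_zero, ← hrel]
  abel

theorem closure_range_mk_eGen :
    AddSubgroup.closure (Set.range fun k => (eGen k : FA ⧸ Hsub)) = ⊤ := by
  rw [eq_top_iff]
  rintro q -
  induction q using QuotientAddGroup.induction_on with
  | H x =>
    induction x using Finsupp.induction with
    | zero => exact AddSubgroup.zero_mem _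
    | single_add p a x _ _ ih =>
      rw [QuotientAddGroup.mk_add, ← Finsupp.smul_single_one, QuotientAddGroup.mk_zsmul]
      refine AddSubgroup.add_mem _ (AddSubgroup.zsmul_mem _ ?_ a) ih
      obtain ⟨i, k⟩ := p
      fin_cases i
      · exact AddSubgroup.subset_closure ⟨k, rfl⟩
      · exact (mk_gGen k).symm ▸
          AddSubgroup.neg_mem _ (AddSubgroup.subset_closure ⟨k + 1, rfl⟩)
      · exact (mk_hGen k).symm ▸
          AddSubgroup.neg_mem _ (AddSubgroup.subset_closure ⟨k + 1, rfl⟩)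

theorem exists_eq_zsmul_mk_eGen (q : FA ⧸ Hsub) :
    ∃ (N : ℕ) (n : ℤ), q = n • (eGen N : FA ⧸ Hsub) :=
  exists_eq_zsmul_of_mem_closure_range mk_eGen (closure_range_mk_eGen ▸ AddSubgroup.mem_top q)

theorem quotientDyadicHom_injective : Function.Injective quotientDyadicHom := by
  refine (injective_iff_map_eq_zero _).2 fun q hq => ?_
  obtain ⟨N, n, rfl⟩ := exists_eq_zsmul_mk_eGen q
  rw [map_zsmul, quotientDyadicHom_mk, dyadicHom_eGen, zsmul_eq_mul] at hq
  have hn : n = 0 := by exact_mod_cast (mul_eq_zero.1 hq).resolve_right (by positivity)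
  rw [hn, zero_zsmul]

theorem quotientDyadicHom_range : quotientDyadicHom.range = DyadicSubgroup := by
  rw [AddMonoidHom.range_eq_map, ← closure_range_mk_eGen, AddMonoidHom.map_closure,
    ← Set.range_comp, DyadicSubgroup]
  simp only [Function.comp_def, quotientDyadicHom_mk, dyadicHom_eGen]

/-- `A/H` is isomorphic to `ℤ[1/2]` via `e_k ↦ 1/2^k`, `g_k, h_k ↦ -1/2^(k+1)`. -/
theorem stmt15 :
    ∃ φ : (FA ⧸ Hsub) ≃+ DyadicSubgroup,
      (∀ k : ℕ, ((φ (QuotientAddGroup.mk (eGen k)) : ℚ)) = 1 / 2 ^ k) ∧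
      (∀ k : ℕ, ((φ (QuotientAddGroup.mk (gGen k)) : ℚ)) = -(1 / 2 ^ (k + 1))) ∧
      (∀ k : ℕ, ((φ (QuotientAddGroup.mk (hGen k)) : ℚ)) = -(1 / 2 ^ (k + 1))) :=
  ⟨(AddMonoidHom.ofInjective quotientDyadicHom_injective).trans
      (AddEquiv.addSubgroupCongr quotientDyadicHom_range),
    dyadicHom_eGen, dyadicHom_gGen, dyadicHom_hGen⟩
end

section
/- With A and H as above, the image of H in A/2A equals A/2A; that is, every basis element of A is congruent mod 2A to an element of H. (Explicitly, e_k ≡ (e_k+g_k+h_k) + (g_k+e_{k+1}) + (h_k+e_{k+1}) mod 2A.) -/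
theorem Finsupp.addSubgroup_eq_top_of_single_one_mem {α : Type*} (K : AddSubgroup (α →₀ ℤ))
    (h : ∀ a, Finsupp.single a 1 ∈ K) : K = ⊤ := by
  refine (AddSubgroup.eq_top_iff' K).2 fun f => ?_
  induction f using Finsupp.induction_linear with
  | zero => exact zero_mem K
  | add f g hf hg => exact add_mem hf hg
  | single a n => simpa only [Finsupp.smul_single_one] using zsmul_mem (h a) n

lemma eGen_add_gGen_add_hGen_mem_Hsub (k : ℕ) : eGen k + gGen k + hGen k ∈ Hsub :=
  AddSubgroup.subset_closure (Or.inl (Or.inl ⟨k, rfl⟩))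

lemma gGen_add_eGen_succ_mem_Hsub (k : ℕ) : gGen k + eGen (k + 1) ∈ Hsub :=
  AddSubgroup.subset_closure (Or.inl (Or.inr ⟨k, rfl⟩))

lemma hGen_add_eGen_succ_mem_Hsub (k : ℕ) : hGen k + eGen (k + 1) ∈ Hsub :=
  AddSubgroup.subset_closure (Or.inr ⟨k, rfl⟩)

noncomputable def HsubAddTwoMul : AddSubgroup FA := Hsub ⊔ (nsmulAddMonoidHom 2).range

lemma mem_HsubAddTwoMul_of_mem_Hsub {x : FA} (hx : x ∈ Hsub) : x ∈ HsubAddTwoMul :=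
  AddSubgroup.mem_sup_left hx

lemma two_nsmul_mem_HsubAddTwoMul (b : FA) : 2 • b ∈ HsubAddTwoMul :=
  AddSubgroup.mem_sup_right ⟨b, rfl⟩

lemma eGen_mem_HsubAddTwoMul (k : ℕ) : eGen k ∈ HsubAddTwoMul := by
  have hsum : eGen k = (eGen k + gGen k + hGen k) + (gGen k + eGen (k + 1))
      + (hGen k + eGen (k + 1)) - 2 • (gGen k + hGen k + eGen (k + 1)) := by
    abel
  rw [hsum]
  refine sub_mem (add_mem (add_mem ?_ ?_) ?_) (two_nsmul_mem_HsubAddTwoMul _) <;>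
    apply mem_HsubAddTwoMul_of_mem_Hsub
  exacts [eGen_add_gGen_add_hGen_mem_Hsub k, gGen_add_eGen_succ_mem_Hsub k,
    hGen_add_eGen_succ_mem_Hsub k]

lemma gGen_mem_HsubAddTwoMul (k : ℕ) : gGen k ∈ HsubAddTwoMul := by
  rw [← add_sub_cancel_right (gGen k) (eGen (k + 1))]
  exact sub_mem (mem_HsubAddTwoMul_of_mem_Hsub (gGen_add_eGen_succ_mem_Hsub k))
    (eGen_mem_HsubAddTwoMul (k + 1))

lemma hGen_mem_HsubAddTwoMul (k : ℕ) : hGen k ∈ HsubAddTwoMul := by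
  rw [← add_sub_cancel_right (hGen k) (eGen (k + 1))]
  exact sub_mem (mem_HsubAddTwoMul_of_mem_Hsub (hGen_add_eGen_succ_mem_Hsub k))
    (eGen_mem_HsubAddTwoMul (k + 1))

lemma HsubAddTwoMul_eq_top : HsubAddTwoMul = ⊤ := by
  refine Finsupp.addSubgroup_eq_top_of_single_one_mem _ fun ⟨i, k⟩ => ?_
  fin_cases i
  exacts [eGen_mem_HsubAddTwoMul k, gGen_mem_HsubAddTwoMul k, hGen_mem_HsubAddTwoMul k]

/-- The image of `H` in `A/2A` is all of `A/2A`. -/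
theorem stmt16 : ∀ a : FA, ∃ x ∈ Hsub, ∃ b : FA, a = x + 2 • b := by
  intro a
  obtain ⟨x, hx, _, ⟨b, rfl⟩, hxb⟩ :=
    AddSubgroup.mem_sup.1 (HsubAddTwoMul_eq_top ▸ AddSubgroup.mem_top a)
  exact ⟨x, hx, b, hxb.symm⟩
end

section
/- Finite counterexample (wheel): In the cyclic group ℤ_{2k−1} with k ≥ 2, consider gains g₁, …, g_{2k} ∈ ℤ_{2k−1} on the outer edges of the wheel W_{2k} satisfying g_{i+1} + g_{i+2} + ⋯ + g_{i+2k−1} = 0 (indices mod 2k) for all i. Then all g_i are equal to a common value a with (2k−1)·a = 0, and conversely any such constant assignment satisfies all these relations; for a ≠ 0 the total sum g₁ + ⋯ + g_{2k} = a ≠ 0, so the outer cycle is unbalanced while all 2k Hamiltonian-circle relations hold. -/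
/-! Adding `g i` to the window of `2k - 1` gains following `i` completes the full cycle, so when
every window vanishes each `g i` equals the total sum `g₁ + ⋯ + g_{2k}`. -/

open Finset

namespace ZMod

variable {n : ℕ} [NeZero n] {M : Type*}

theorem sum_range_add_natCast [AddCommMonoid M] (f : ZMod n → M) (i : ZMod n) :
    ∑ j ∈ range n, f (i + j) = ∑ x, f x := by
  refine sum_nbij (fun j : ℕ ↦ i + j) (by simp) ?_ ?_ (fun _ _ ↦ rfl)
  · intro a ha b hb hab
    simpa [natCast_eq_natCast_iff', Nat.mod_eq_of_lt (mem_range.1 ha),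
      Nat.mod_eq_of_lt (mem_range.1 hb)] using hab
  · intro x _
    exact ⟨(x - i).val, by simp [val_lt], by simp⟩

theorem sum_range_pred_succ_add_self [AddCommMonoid M] (f : ZMod n → M) (i : ZMod n) :
    ∑ j ∈ range (n - 1), f (i + (j + 1 : ℕ)) + f i = ∑ x, f x := by
  obtain ⟨m, rfl⟩ : ∃ m, n = m + 1 := Nat.exists_eq_succ_of_ne_zero (NeZero.ne n)
  simpa [sum_range_succ'] using sum_range_add_natCast f i

theorem eq_sum_of_sum_range_pred_succ_eq_zero [AddCommGroup M] {f : ZMod n → M}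
    (hf : ∀ i, ∑ j ∈ range (n - 1), f (i + (j + 1 : ℕ)) = 0) (i : ZMod n) :
    f i = ∑ x, f x := by
  rw [← sum_range_pred_succ_add_self f i, hf i, zero_add]

end ZMod

/-- Wheel counterexample: if every sum of `2k-1` cyclically consecutive outer gains
vanishes in `ℤ_{2k-1}`, then all gains are equal, the total sum equals the common
value, and conversely every constant assignment satisfies all the relations. -/
theorem stmt17 (k : ℕ) (hk : 2 ≤ k) (g : ZMod (2 * k) → ZMod (2 * k - 1))
    (hg : ∀ i : ZMod (2 * k),
      ∑ j ∈ Finset.range (2 * k - 1), g (i + (j + 1 : ℕ)) = 0) :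
    (∃ a : ZMod (2 * k - 1), (∀ i, g i = a) ∧ (2 * k - 1) • a = 0 ∧
        ∑ i ∈ Finset.range (2 * k), g (i : ZMod (2 * k)) = a) ∧
      (∀ a : ZMod (2 * k - 1), ∀ i : ZMod (2 * k),
        ∑ j ∈ Finset.range (2 * k - 1), (fun _ : ZMod (2 * k) => a) (i + (j + 1 : ℕ)) = 0) := by
  have : NeZero (2 * k) := ⟨by omega⟩
  refine ⟨⟨∑ x, g x, ZMod.eq_sum_of_sum_range_pred_succ_eq_zero hg,
    ZModModule.char_nsmul_eq_zero _ _, by simpa using ZMod.sum_range_add_natCast g 0⟩, fun a i ↦ by simp⟩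
end
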